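/- Let F : ℝⁿ × ℝᵐ → ℝ be twice continuously differentiable with the full Hessian ∇²F(x,z) invertible for every (x,z). Fix c₁, c₂ > 0, p₁ > 2, 1 < p₂ < 2, α₁ = 2 − (p₁−2)/(p₁−1), α₂ = 2 − (p₂−2)/(p₂−1), and write v(x,z) = ∇F(x,z). Then every trajectory of the flow (ẋ, ż) = −(∇²F(x,z))⁻¹ (c₁ v/‖v‖^{(p₁−2)/(p₁−1)} + c₂ v/‖v‖^{(p₂−2)/(p₂−1)}) (right-hand side 0 when v = 0) satisfies ∇F(x(t), z(t)) = 0 for all t ≥ T_SP := 2^{1−α₁/2}/(c₁(2−α₁)) + 2^{1−α₂/2}/(c₂(α₂−2)), for every initial condition; i.e. the trajectory reaches the set of critical points of F in fixed time. -/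

import Mathlib

/-!
Along a trajectory the Newton direction `(∇²F)⁻¹` cancels the Hessian, so `v = ∇F ∘ y` moves with
velocity `-(c₁ v/‖v‖^(2-α₁) + c₂ v/‖v‖^(2-α₂))` and `V = ‖v‖²` obeys
`V' = -2 (c₁ V^(α₁/2) + c₂ V^(α₂/2))` exactly. Since `α₂/2 > 1`, the quantity `V^(1-α₂/2)` grows at
rate at least `c₂ (α₂ - 2)`, which brings `V` below `2` (any threshold would do) within time
`2^(1-α₂/2) / (c₂ (α₂ - 2))` whatever `V 0` is. Since `α₁/2 < 1`, the quantity `V^(1-α₁/2)` then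
decreases at rate at least `c₁ (2 - α₁)`, so it reaches `0` within a further time
`2^(1-α₁/2) / (c₁ (2 - α₁))`.
-/

-- `HasDerivAt` on `WithLp 2 (_ × _)` needs a deep instance search.
set_option synthInstance.maxHeartbeats 1000000
set_option maxHeartbeats 1000000

open Set

section ScalarComparison

variable {V V' : ℝ → ℝ} {a μ s t : ℝ}

lemma sub_le_mul_sub_of_hasDerivAt_le {f f' : ℝ → ℝ} {C : ℝ} (hst : s ≤ t)
    (hf : ∀ u ∈ Icc s t, HasDerivAt f (f' u) u) (hC : ∀ u ∈ Icc s t, f' u ≤ C) :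
    f t - f s ≤ C * (t - s) :=
  (convex_Icc s t).image_sub_le_mul_sub_of_deriv_le
    (fun u hu => (hf u hu).continuousAt.continuousWithinAt)
    (fun u hu => (hf u (interior_subset hu)).differentiableAt.differentiableWithinAt)
    (fun u hu => (hf u (interior_subset hu)).deriv ▸ hC u (interior_subset hu))
    s (left_mem_Icc.2 hst) t (right_mem_Icc.2 hst) hst

lemma hasDerivAt_rpow_one_sub {u : ℝ} (hV : HasDerivAt V (V' u) u) (hpos : 0 < V u) :
    HasDerivAt (fun x => V x ^ (1 - μ)) ((1 - μ) * (V' u * V u ^ (-μ))) u := by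
  convert hV.rpow_const (p := 1 - μ) (Or.inl hpos.ne') using 1
  rw [sub_sub_cancel_left]
  ring

lemma mul_rpow_neg_le {v v' : ℝ} (hv : 0 < v) (hv' : v' ≤ -(a * v ^ μ)) :
    v' * v ^ (-μ) ≤ -a := by
  have hcancel : v ^ μ * v ^ (-μ) = 1 := by
    rw [Real.rpow_neg hv.le, mul_inv_cancel₀ (Real.rpow_pos_of_pos hv μ).ne']
  calc v' * v ^ (-μ) ≤ -(a * v ^ μ) * v ^ (-μ) :=
        mul_le_mul_of_nonneg_right hv' (Real.rpow_nonneg hv.le _)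
    _ = -a := by rw [neg_mul, mul_assoc, hcancel, mul_one]

lemma rpow_one_sub_le_of_hasDerivAt (hμ : μ < 1) (hst : s ≤ t)
    (hpos : ∀ u ∈ Icc s t, 0 < V u) (hV : ∀ u ∈ Icc s t, HasDerivAt V (V' u) u)
    (hV' : ∀ u ∈ Icc s t, V' u ≤ -(a * V u ^ μ)) :
    V t ^ (1 - μ) ≤ V s ^ (1 - μ) - a * (1 - μ) * (t - s) := by
  have := sub_le_mul_sub_of_hasDerivAt_le (C := -(a * (1 - μ))) hst
    (fun u hu => hasDerivAt_rpow_one_sub (hV u hu) (hpos u hu))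
    (fun u hu => by nlinarith [mul_rpow_neg_le (hpos u hu) (hV' u hu)])
  linarith

lemma rpow_one_sub_ge_of_hasDerivAt (hμ : 1 < μ) (hst : s ≤ t)
    (hpos : ∀ u ∈ Icc s t, 0 < V u) (hV : ∀ u ∈ Icc s t, HasDerivAt V (V' u) u)
    (hV' : ∀ u ∈ Icc s t, V' u ≤ -(a * V u ^ μ)) :
    V s ^ (1 - μ) + a * (μ - 1) * (t - s) ≤ V t ^ (1 - μ) := by
  have := sub_le_mul_sub_of_hasDerivAt_le (C := -(a * (μ - 1))) hst
    (fun u hu => (hasDerivAt_rpow_one_sub (hV u hu) (hpos u hu)).neg)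
    (fun u hu => by nlinarith [mul_rpow_neg_le (hpos u hu) (hV' u hu)])
  simp only [Pi.neg_apply] at this
  linarith

end ScalarComparison

theorem eq_zero_of_hasDerivAt_le_neg_rpow_add_rpow {V V' : ℝ → ℝ} {a b μ ν θ t : ℝ}
    (ha : 0 < a) (hb : 0 < b) (hμ : μ < 1) (hν : 1 < ν) (hθ : 0 < θ)
    (hV_nonneg : ∀ s, 0 ≤ s → 0 ≤ V s) (hV : ∀ s, 0 ≤ s → HasDerivAt V (V' s) s)
    (hV' : ∀ s, 0 ≤ s → V' s ≤ -(a * V s ^ μ + b * V s ^ ν))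
    (ht : θ ^ (1 - μ) / (a * (1 - μ)) + θ ^ (1 - ν) / (b * (ν - 1)) ≤ t) :
    V t = 0 := by
  set T₁ := θ ^ (1 - μ) / (a * (1 - μ))
  set T₂ := θ ^ (1 - ν) / (b * (ν - 1))
  have haμ : 0 < a * (1 - μ) := mul_pos ha (by linarith)
  have hbν : 0 < b * (ν - 1) := mul_pos hb (by linarith)
  have hT₁ : a * (1 - μ) * T₁ = θ ^ (1 - μ) := mul_div_cancel₀ _ haμ.ne'
  have hT₂ : b * (ν - 1) * T₂ = θ ^ (1 - ν) := mul_div_cancel₀ _ hbν.ne'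
  have hT₁_pos : 0 < T₁ := div_pos (Real.rpow_pos_of_pos hθ _) haμ
  have hT₂_pos : 0 < T₂ := div_pos (Real.rpow_pos_of_pos hθ _) hbν
  have hμ_term : ∀ s, 0 ≤ s → V' s ≤ -(a * V s ^ μ) := fun s hs => by
    nlinarith [hV' s hs, Real.rpow_nonneg (hV_nonneg s hs) ν]
  have hν_term : ∀ s, 0 ≤ s → V' s ≤ -(b * V s ^ ν) := fun s hs => by
    nlinarith [hV' s hs, Real.rpow_nonneg (hV_nonneg s hs) μ]
  by_contra hVt
  have hVt_pos : 0 < V t := lt_of_le_of_ne (hV_nonneg t (by linarith)) (Ne.symm hVt)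
  have hV_anti : ∀ s ∈ Icc 0 t, V t ≤ V s := fun s hs => by
    have := sub_le_mul_sub_of_hasDerivAt_le (C := 0) hs.2
      (fun u hu => hV u (hs.1.trans hu.1))
      (fun u hu => by nlinarith [hμ_term u (hs.1.trans hu.1),
        Real.rpow_nonneg (hV_nonneg u (hs.1.trans hu.1)) μ])
    linarith
  have hpos : ∀ s ∈ Icc 0 t, 0 < V s := fun s hs => hVt_pos.trans_le (hV_anti s hs)
  have hT₂_le : T₂ ≤ t := by linarith
  have h_below : V T₂ < θ := by
    have h_grow := rpow_one_sub_ge_of_hasDerivAt hν hT₂_pos.le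
      (fun u hu => hpos u ⟨hu.1, hu.2.trans hT₂_le⟩) (fun u hu => hV u hu.1)
      (fun u hu => hν_term u hu.1)
    by_contra! hge
    have := Real.rpow_le_rpow_of_nonpos hθ hge (by linarith : 1 - ν ≤ 0)
    nlinarith [Real.rpow_pos_of_pos (hpos 0 ⟨le_rfl, by linarith⟩) (1 - ν)]
  have h_decay := rpow_one_sub_le_of_hasDerivAt hμ hT₂_le
    (fun u hu => hpos u ⟨hT₂_pos.le.trans hu.1, hu.2⟩)
    (fun u hu => hV u (hT₂_pos.le.trans hu.1)) (fun u hu => hμ_term u (hT₂_pos.le.trans hu.1))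
  have := Real.rpow_lt_rpow (hpos T₂ ⟨hT₂_pos.le, hT₂_le⟩).le h_below (by linarith : 0 < 1 - μ)
  nlinarith [Real.rpow_pos_of_pos hVt_pos (1 - μ)]

section NewtonFlow

variable {E : Type*} [NormedAddCommGroup E] [InnerProductSpace ℝ E]

lemma ContDiff.gradient [CompleteSpace E] {f : E → ℝ} {m n : WithTop ℕ∞} (hf : ContDiff ℝ n f)
    (hmn : m + 1 ≤ n) : ContDiff ℝ m (gradient f) :=
  (InnerProductSpace.toDual ℝ E).symm.contDiff.comp (hf.fderiv_right hmn)

noncomputable def fixedTimeNewtonField [DecidableEq E] (g : E → E) (c₁ c₂ q₁ q₂ : ℝ) (x : E) : E :=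
  if g x = 0 then 0
  else -(Ring.inverse (fderiv ℝ g x) ((c₁ / ‖g x‖ ^ q₁) • g x + (c₂ / ‖g x‖ ^ q₂) • g x))

lemma fixedTimeNewtonField_eq [DecidableEq E] (g : E → E) (c₁ c₂ q₁ q₂ : ℝ) (x : E) :
    fixedTimeNewtonField g c₁ c₂ q₁ q₂ x
      = -(Ring.inverse (fderiv ℝ g x) ((c₁ / ‖g x‖ ^ q₁ + c₂ / ‖g x‖ ^ q₂) • g x)) := by
  rw [fixedTimeNewtonField, add_smul]
  split_ifs with hx <;> simp [hx]

lemma HasDerivAt.comp_neg_inverse_fderiv {G : Type*} [NormedAddCommGroup G] [NormedSpace ℝ G]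
    {g : G → G} {y : ℝ → G} {w : G} {t : ℝ} (hg : DifferentiableAt ℝ g (y t))
    (hunit : IsUnit (fderiv ℝ g (y t)))
    (hy : HasDerivAt y (-(Ring.inverse (fderiv ℝ g (y t)) w)) t) :
    HasDerivAt (fun s => g (y s)) (-w) t := by
  have := hg.hasFDerivAt.comp_hasDerivAt t hy
  rwa [map_neg, ← mul_apply_eq_comp, Ring.mul_inverse_cancel _ hunit,
    one_apply_eq_self] at this

lemma div_rpow_two_sub_mul_sq {r : ℝ} (hr : 0 ≤ r) (c : ℝ) {α : ℝ} (hα : α ≠ 0) :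
    c / r ^ (2 - α) * r ^ 2 = c * (r ^ 2) ^ (α / 2) := by
  rcases hr.eq_or_lt with rfl | hr
  · simp [Real.zero_rpow (div_ne_zero hα two_ne_zero)]
  · rw [← Real.rpow_natCast, ← Real.rpow_mul hr.le, div_mul_eq_mul_div, mul_div_assoc,
      ← Real.rpow_sub hr]
    congr 2
    push_cast
    ring

lemma hasDerivAt_norm_sq_comp_of_fixedTimeNewtonField [DecidableEq E] {g : E → E} {y : ℝ → E}
    {c₁ c₂ α₁ α₂ t : ℝ} (hα₁ : α₁ ≠ 0) (hα₂ : α₂ ≠ 0) (hg : DifferentiableAt ℝ g (y t))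
    (hunit : IsUnit (fderiv ℝ g (y t)))
    (hy : HasDerivAt y (fixedTimeNewtonField g c₁ c₂ (2 - α₁) (2 - α₂) (y t)) t) :
    HasDerivAt (fun s => ‖g (y s)‖ ^ 2)
      (-(2 * c₁ * (‖g (y t)‖ ^ 2) ^ (α₁ / 2) + 2 * c₂ * (‖g (y t)‖ ^ 2) ^ (α₂ / 2))) t := by
  rw [fixedTimeNewtonField_eq] at hy
  convert (hy.comp_neg_inverse_fderiv hg hunit).norm_sq using 1
  rw [inner_neg_right, real_inner_smul_right, real_inner_self_eq_norm_sq, add_mul,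
    div_rpow_two_sub_mul_sq (norm_nonneg _) c₁ hα₁, div_rpow_two_sub_mul_sq (norm_nonneg _) c₂ hα₂]
  ring

end NewtonFlow

/-- Fixed-time convergence of the modified Newton saddle-point dynamics to the critical set:
if `F(x,z)` is twice continuously differentiable with invertible Hessian everywhere, then
every trajectory of
`(ẋ, ż) = −(∇²F)⁻¹(c₁ v/‖v‖^{(p₁−2)/(p₁−1)} + c₂ v/‖v‖^{(p₂−2)/(p₂−1)})`, `v = ∇F`,
satisfies `∇F(x(t), z(t)) = 0` for all `t ≥ T_SP`, where
`T_SP = 2^{1−α₁/2}/(c₁(2−α₁)) + 2^{1−α₂/2}/(c₂(α₂−2))`. -/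
theorem fixed_time_saddle_point_dynamics_critical_set
    {n m : ℕ} (c₁ c₂ p₁ p₂ : ℝ) (hc₁ : 0 < c₁) (hc₂ : 0 < c₂)
    (hp₁ : 2 < p₁) (hp₂ : 1 < p₂) (hp₂' : p₂ < 2)
    (α₁ α₂ : ℝ) (hα₁ : α₁ = 2 - (p₁ - 2) / (p₁ - 1)) (hα₂ : α₂ = 2 - (p₂ - 2) / (p₂ - 1))
    (F : WithLp 2 (EuclideanSpace ℝ (Fin n) × EuclideanSpace ℝ (Fin m)) → ℝ)
    (hF : ContDiff ℝ 2 F)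
    (hinv : ∀ y : WithLp 2 (EuclideanSpace ℝ (Fin n) × EuclideanSpace ℝ (Fin m)),
      IsUnit (fderiv ℝ (gradient F) y))
    (y : ℝ → WithLp 2 (EuclideanSpace ℝ (Fin n) × EuclideanSpace ℝ (Fin m)))
    (hy : ∀ t : ℝ, 0 ≤ t → HasDerivAt y
      (if gradient F (y t) = 0 then 0
       else -(Ring.inverse (fderiv ℝ (gradient F) (y t))
          ((c₁ / ‖gradient F (y t)‖ ^ ((p₁ - 2) / (p₁ - 1))) • gradient F (y t)
            + (c₂ / ‖gradient F (y t)‖ ^ ((p₂ - 2) / (p₂ - 1))) • gradient F (y t)))) t) :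
    ∀ t : ℝ,
      2 ^ (1 - α₁ / 2) / (c₁ * (2 - α₁)) + 2 ^ (1 - α₂ / 2) / (c₂ * (α₂ - 2)) ≤ t →
      gradient F (y t) = 0 := by
  intro t ht
  have hq₁ : (p₁ - 2) / (p₁ - 1) = 2 - α₁ := by rw [hα₁]; ring
  have hq₂ : (p₂ - 2) / (p₂ - 1) = 2 - α₂ := by rw [hα₂]; ring
  have hα₁_pos : 0 < α₁ := by
    have : (p₁ - 2) / (p₁ - 1) < 1 := (div_lt_one (by linarith)).2 (by linarith)
    linarith
  have hα₁_lt : α₁ < 2 := by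
    have : 0 < (p₁ - 2) / (p₁ - 1) := div_pos (by linarith) (by linarith)
    linarith
  have hα₂_gt : 2 < α₂ := by
    have : (p₂ - 2) / (p₂ - 1) < 0 := div_neg_of_neg_of_pos (by linarith) (by linarith)
    linarith
  have hgrad : Differentiable ℝ (gradient F) :=
    (hF.gradient (m := 1) (by norm_num)).differentiable one_ne_zero
  have hV : ∀ s, 0 ≤ s → HasDerivAt (fun u => ‖gradient F (y u)‖ ^ 2)
      (-(2 * c₁ * (‖gradient F (y s)‖ ^ 2) ^ (α₁ / 2)
        + 2 * c₂ * (‖gradient F (y s)‖ ^ 2) ^ (α₂ / 2))) s := fun s hs =>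
    hasDerivAt_norm_sq_comp_of_fixedTimeNewtonField hα₁_pos.ne' (by linarith) (hgrad _)
      (hinv _) (by rw [← hq₁, ← hq₂]; exact hy s hs)
  have hT : 2 ^ (1 - α₁ / 2) / (c₁ * (2 - α₁)) + 2 ^ (1 - α₂ / 2) / (c₂ * (α₂ - 2))
      = (2 : ℝ) ^ (1 - α₁ / 2) / (2 * c₁ * (1 - α₁ / 2))
        + 2 ^ (1 - α₂ / 2) / (2 * c₂ * (α₂ / 2 - 1)) := by ring_nf
  have hVt := eq_zero_of_hasDerivAt_le_neg_rpow_add_rpow (by positivity) (by positivity)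
    (by linarith) (by linarith) two_pos (fun s _ => sq_nonneg _) hV (fun s _ => le_rfl)
    (hT ▸ ht)
  simpa using hVt
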